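/- If a convex body K in the plane slides freely in a disc of radius r, then K is an intersection of closed discs of radius r, hence r-spindle convex. -/

import Mathlib

open Metric Set
open scoped RealInnerProductSpace

namespace SlideAux

variable {F : Type*} [NormedAddCommGroup F] [InnerProductSpace ℝ F]

lemma quad_mem {r : ℝ} (hr : 0 < r) (z w v : F) (hv : ‖v‖ = 1) :
    dist z (w - r • v) ≤ r ↔ 2*r*⟪z - w, v⟫ + ‖z - w‖^2 ≤ 0 := by
  have h0 : z - (w - r • v) = (z - w) + r • v := by abel
  have h1 : (dist z (w - r • v))^2 = ‖z-w‖^2 + 2*r*⟪z - w, v⟫ + r^2 := by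
    rw [dist_eq_norm, h0, norm_add_sq_real, real_inner_smul_right, norm_smul,
      Real.norm_eq_abs, abs_of_pos hr, hv, mul_one]
    ring
  constructor
  · intro h
    nlinarith [dist_nonneg (x := z) (y := w - r • v)]
  · intro h
    nlinarith [dist_nonneg (x := z) (y := w - r • v)]

lemma sin_add_le (a b : ℝ) (ha : 0 ≤ a) (hb : 0 ≤ b) (hab : a + b ≤ Real.pi) :
    Real.sin (a + b) ≤ Real.sin a + Real.sin b := by
  rw [Real.sin_add]
  nlinarith [Real.sin_nonneg_of_nonneg_of_le_pi ha (by linarith : a ≤ Real.pi),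
    Real.sin_nonneg_of_nonneg_of_le_pi hb (by linarith : b ≤ Real.pi),
    Real.cos_le_one a, Real.cos_le_one b]

lemma trig_id_cos (ψ₁ ψ ψ₂ : ℝ) :
    Real.sin (ψ₂ - ψ) * Real.cos ψ₁ + Real.sin (ψ - ψ₁) * Real.cos ψ₂
      = Real.sin (ψ₂ - ψ₁) * Real.cos ψ := by
  rw [Real.sin_sub, Real.sin_sub, Real.sin_sub]; ring

lemma trig_id_sin (ψ₁ ψ ψ₂ : ℝ) :
    Real.sin (ψ₂ - ψ) * Real.sin ψ₁ + Real.sin (ψ - ψ₁) * Real.sin ψ₂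
      = Real.sin (ψ₂ - ψ₁) * Real.sin ψ := by
  rw [Real.sin_sub, Real.sin_sub, Real.sin_sub]; ring

lemma U_comb (u ju : F) {ψ₁ ψ ψ₂ : ℝ} (h₁ : ψ₁ ≤ ψ) (h₂ : ψ ≤ ψ₂) (hπ : ψ₂ - ψ₁ < Real.pi) :
    ∃ α β : ℝ, 0 ≤ α ∧ 0 ≤ β ∧ 1 ≤ α + β ∧
      α • (Real.cos ψ₁ • u + Real.sin ψ₁ • ju) + β • (Real.cos ψ₂ • u + Real.sin ψ₂ • ju)
        = Real.cos ψ • u + Real.sin ψ • ju := by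
  rcases eq_or_lt_of_le (le_trans h₁ h₂) with heq | hlt
  · have hψ : ψ = ψ₁ := le_antisymm (heq ▸ h₂) h₁
    exact ⟨1, 0, by norm_num, by norm_num, by norm_num, by simp [hψ]⟩
  · have hDpos : 0 < Real.sin (ψ₂ - ψ₁) :=
      Real.sin_pos_of_pos_of_lt_pi (by linarith) hπ
    have hs1 : 0 ≤ Real.sin (ψ₂ - ψ) :=
      Real.sin_nonneg_of_nonneg_of_le_pi (by linarith) (by linarith)
    have hs2 : 0 ≤ Real.sin (ψ - ψ₁) :=
      Real.sin_nonneg_of_nonneg_of_le_pi (by linarith) (by linarith)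
    refine ⟨Real.sin (ψ₂ - ψ)/Real.sin (ψ₂ - ψ₁), Real.sin (ψ - ψ₁)/Real.sin (ψ₂ - ψ₁),
      div_nonneg hs1 hDpos.le, div_nonneg hs2 hDpos.le, ?_, ?_⟩
    · rw [← add_div, le_div_iff₀ hDpos, one_mul]
      have h := sin_add_le (ψ₂ - ψ) (ψ - ψ₁) (by linarith) (by linarith) (by linarith)
      have he : (ψ₂ - ψ) + (ψ - ψ₁) = ψ₂ - ψ₁ := by ring
      rw [he] at h
      linarith
    · have e1 : Real.sin (ψ₂ - ψ)/Real.sin (ψ₂ - ψ₁) * Real.cos ψ₁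
          + Real.sin (ψ - ψ₁)/Real.sin (ψ₂ - ψ₁) * Real.cos ψ₂ = Real.cos ψ := by
        field_simp
        linear_combination trig_id_cos ψ₁ ψ ψ₂
      have e2 : Real.sin (ψ₂ - ψ)/Real.sin (ψ₂ - ψ₁) * Real.sin ψ₁
          + Real.sin (ψ - ψ₁)/Real.sin (ψ₂ - ψ₁) * Real.sin ψ₂ = Real.sin ψ := by
        field_simp
        linear_combination trig_id_sin ψ₁ ψ ψ₂
      rw [← e1, ← e2]
      module

end SlideAux

set_option maxHeartbeats 4000000 in
theorem slidesFreely_imp_inter_discs (r : ℝ) (hr : 0 < r)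
    (K : Set (EuclideanSpace ℝ (Fin 2)))
    (hconv : Convex ℝ K) (hcomp : IsCompact K) (hint : (interior K).Nonempty)
    (hslide : ∀ x' ∈ frontier K, ∃ p' : EuclideanSpace ℝ (Fin 2),
      dist x' p' = r ∧ K ⊆ closedBall p' r) :
    K = ⋂₀ {D | ∃ p : EuclideanSpace ℝ (Fin 2), D = closedBall p r ∧ K ⊆ D} := by
  classical
  apply Set.Subset.antisymm
  · intro z hz
    rw [Set.mem_sInter]
    rintro D ⟨p, rfl, hKD⟩
    exact hKD hz
  intro x hx
  by_contra hxK
  have hKne : K.Nonempty := hint.mono interior_subset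
  have hKcl : IsClosed K := hcomp.isClosed
  set L : Set (EuclideanSpace ℝ (Fin 2)) := {c | ∀ z ∈ K, dist z c ≤ r} with hLdef
  have hxL : ∀ c ∈ L, dist x c ≤ r := by
    intro c hc
    have hsub : K ⊆ closedBall c r := fun z hz => mem_closedBall.mpr (hc z hz)
    exact mem_closedBall.mp (Set.mem_sInter.mp hx (closedBall c r) ⟨c, rfl, hsub⟩)
  have hLclosed : IsClosed L := by
    have : L = ⋂ z ∈ K, {c | dist z c ≤ r} := by
      ext c; simp [hLdef]
    rw [this]
    exact isClosed_biInter fun z _ =>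
      isClosed_le (continuous_const.dist continuous_id) continuous_const
  -- projection
  obtain ⟨y, hyK, hy⟩ := exists_norm_eq_iInf_of_complete_convex hKne hKcl.isComplete hconv x
  have hproj : ∀ w ∈ K, ⟪x - y, w - y⟫ ≤ 0 :=
    (norm_eq_iInf_iff_real_inner_le_zero hconv hyK).mp hy
  have hxy : x ≠ y := fun h => hxK (h ▸ hyK)
  set d : ℝ := ‖x - y‖ with hd
  have hdpos : 0 < d := norm_pos_iff.mpr (sub_ne_zero.mpr hxy)
  obtain ⟨u, hu⟩ : ∃ u : EuclideanSpace ℝ (Fin 2), u = d⁻¹ • (x - y) := ⟨_, rfl⟩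
  have hunorm : ‖u‖ = 1 := by
    rw [hu, norm_smul, Real.norm_eq_abs, abs_of_pos (inv_pos.mpr hdpos), ← hd]
    field_simp
  have hproju : ∀ w ∈ K, ⟪u, w - y⟫ ≤ 0 := by
    intro w hw
    rw [hu, real_inner_smul_left]
    exact mul_nonpos_of_nonneg_of_nonpos (inv_pos.mpr hdpos).le (hproj w hw)
  have huxy : ⟪u, x - y⟫ = d := by
    rw [hu, real_inner_smul_left, real_inner_self_eq_norm_sq, ← hd]
    field_simp
  -- orthonormal basis u, ju
  obtain ⟨ju, hju⟩ : ∃ ju : EuclideanSpace ℝ (Fin 2),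
      ju = (WithLp.equiv 2 (Fin 2 → ℝ)).symm ![-(u 1), u 0] := ⟨_, rfl⟩
  have hju0 : ju 0 = -(u 1) := by
    rw [hju]; simp
  have hju1 : ju 1 = u 0 := by
    rw [hju]; simp
  have hinner_eq : ∀ a b : EuclideanSpace ℝ (Fin 2), ⟪a, b⟫ = a 0 * b 0 + a 1 * b 1 := by
    intro a b
    rw [PiLp.inner_apply, Fin.sum_univ_two]
    simp [RCLike.inner_apply, conj_trivial]; ring
  have huu : u 0 * u 0 + u 1 * u 1 = 1 := by
    have h := real_inner_self_eq_norm_sq u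
    rw [hinner_eq, hunorm] at h
    linarith [h]
  have horth : ⟪u, ju⟫ = 0 := by rw [hinner_eq, hju0, hju1]; ring
  have hjunorm : ‖ju‖ = 1 := by
    have h : ⟪ju, ju⟫ = 1 := by rw [hinner_eq, hju0, hju1]; nlinarith [huu]
    rw [real_inner_self_eq_norm_sq] at h
    nlinarith [norm_nonneg ju]
  have hspan : ∀ w : EuclideanSpace ℝ (Fin 2), w = ⟪u, w⟫ • u + ⟪ju, w⟫ • ju := by
    intro w
    ext i
    fin_cases i
    · show w 0 = (⟪u, w⟫ • u + ⟪ju, w⟫ • ju) 0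
      rw [PiLp.add_apply, PiLp.smul_apply, PiLp.smul_apply, smul_eq_mul, smul_eq_mul,
        hinner_eq, hinner_eq, hju0, hju1]
      linear_combination (-(w 0)) * huu
    · show w 1 = (⟪u, w⟫ • u + ⟪ju, w⟫ • ju) 1
      rw [PiLp.add_apply, PiLp.smul_apply, PiLp.smul_apply, smul_eq_mul, smul_eq_mul,
        hinner_eq, hinner_eq, hju0, hju1]
      linear_combination (-(w 1)) * huu
  -- the rotating unit vector
  obtain ⟨U, hUval⟩ : ∃ U : ℝ → EuclideanSpace ℝ (Fin 2),
      ∀ ψ, U ψ = Real.cos ψ • u + Real.sin ψ • ju := ⟨_, fun ψ => rfl⟩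
  have hjorth : ⟪ju, u⟫ = 0 := by rw [real_inner_comm]; exact horth
  have hUnorm : ∀ ψ, ‖U ψ‖ = 1 := by
    intro ψ
    have h : ⟪U ψ, U ψ⟫ = 1 := by
      rw [hUval, inner_add_left, inner_add_right, inner_add_right,
        real_inner_smul_left, real_inner_smul_left, real_inner_smul_left, real_inner_smul_left,
        real_inner_smul_right, real_inner_smul_right, real_inner_smul_right, real_inner_smul_right,
        horth, hjorth]
      rw [real_inner_self_eq_norm_sq, real_inner_self_eq_norm_sq, hunorm, hjunorm]
      nlinarith [Real.sin_sq_add_cos_sq ψ]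
    rw [real_inner_self_eq_norm_sq] at h
    nlinarith [norm_nonneg (U ψ)]
  have hU0 : U 0 = u := by rw [hUval]; simp
  have hUpi : ∀ ψ, U (ψ + Real.pi) = -U ψ := by
    intro ψ
    rw [hUval, hUval, Real.cos_add_pi, Real.sin_add_pi]
    module
  have hUper : ∀ (ψ : ℝ) (k : ℤ), U (ψ + k * (2 * Real.pi)) = U ψ := by
    intro ψ k
    rw [hUval, hUval, Real.cos_add_int_mul_two_pi, Real.sin_add_int_mul_two_pi]
  have hUcont : Continuous U := by
    have : U = fun ψ => Real.cos ψ • u + Real.sin ψ • ju := funext hUval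
    rw [this]
    exact (Real.continuous_cos.smul continuous_const).add
      (Real.continuous_sin.smul continuous_const)
  -- surjectivity of U onto unit sphere
  have hUsurj : ∀ v : EuclideanSpace ℝ (Fin 2), ‖v‖ = 1 → ∃ ψ, U ψ = v := by
    intro v hv
    obtain ⟨a, ha⟩ : ∃ a : ℝ, a = ⟪u, v⟫ := ⟨_, rfl⟩
    obtain ⟨b, hb⟩ : ∃ b : ℝ, b = ⟪ju, v⟫ := ⟨_, rfl⟩
    have hvspan : a • u + b • ju = v := by rw [ha, hb]; exact (hspan v).symm
    have hab : a^2 + b^2 = 1 := by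
      have h1 : ⟪v, v⟫ = 1 := by rw [real_inner_self_eq_norm_sq, hv]; norm_num
      have h2 : (⟪v, a • u + b • ju⟫ : ℝ) = 1 := by rw [hvspan]; exact h1
      have ha' : (⟪v, u⟫ : ℝ) = a := by rw [ha, real_inner_comm]
      have hb' : (⟪v, ju⟫ : ℝ) = b := by rw [hb, real_inner_comm]
      rw [inner_add_right, real_inner_smul_right, real_inner_smul_right, ha', hb'] at h2
      nlinarith [h2]
    have ha1 : -1 ≤ a ∧ a ≤ 1 := by constructor <;> nlinarith [sq_nonneg b]
    have hsq : Real.sqrt (1 - a^2) = |b| := by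
      rw [show 1 - a^2 = b^2 by linarith, Real.sqrt_sq_eq_abs]
    rcases le_or_gt 0 b with hbs | hbs
    · refine ⟨Real.arccos a, ?_⟩
      rw [hUval, Real.cos_arccos ha1.1 ha1.2, Real.sin_arccos, hsq, abs_of_nonneg hbs]
      exact hvspan
    · refine ⟨-Real.arccos a, ?_⟩
      rw [hUval, Real.cos_neg, Real.sin_neg, Real.cos_arccos ha1.1 ha1.2, Real.sin_arccos,
        hsq, abs_of_neg hbs]
      rw [neg_neg]
      exact hvspan
  -- quadratic membership helpers
  have hmemL : ∀ {w : EuclideanSpace ℝ (Fin 2)} {ψ : ℝ}, w - r • U ψ ∈ L →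
      ∀ z ∈ K, 2*r*⟪z - w, U ψ⟫ + ‖z - w‖^2 ≤ 0 := by
    intro w ψ hm z hz
    exact (SlideAux.quad_mem hr z w (U ψ) (hUnorm ψ)).mp (hm z hz)
  have hnrm : ∀ {w : EuclideanSpace ℝ (Fin 2)} {ψ : ℝ}, w - r • U ψ ∈ L →
      ∀ z ∈ K, ⟪U ψ, z - w⟫ ≤ 0 := by
    intro w ψ hm z hz
    have h := hmemL hm z hz
    rw [real_inner_comm]
    nlinarith [sq_nonneg ‖z - w‖]
  -- flatness contradiction
  have hflat : ∀ (w v : EuclideanSpace ℝ (Fin 2)), ‖v‖ = 1 →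
      (∀ z ∈ K, ⟪v, z - w⟫ ≤ 0) → (∀ z ∈ K, 0 ≤ ⟪v, z - w⟫) → False := by
    intro w v hv hn hp
    obtain ⟨a, ha⟩ := hint
    obtain ⟨ε, hε, hball⟩ := Metric.isOpen_iff.mp isOpen_interior a ha
    have hd1 : dist (a + (ε/2) • v) a < ε := by
      rw [dist_eq_norm, add_sub_cancel_left, norm_smul, Real.norm_eq_abs, hv,
        abs_of_pos (by linarith), mul_one]
      linarith
    have hd2 : dist (a - (ε/2) • v) a < ε := by
      rw [dist_eq_norm, sub_sub_cancel_left, norm_neg, norm_smul, Real.norm_eq_abs, hv,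
        abs_of_pos (by linarith), mul_one]
      linarith
    have hz1 : a + (ε/2) • v ∈ K := interior_subset (hball (mem_ball.mpr hd1))
    have hz2 : a - (ε/2) • v ∈ K := interior_subset (hball (mem_ball.mpr hd2))
    have e1 := hn _ hz1
    have e2 := hp _ hz2
    have r1 : a + (ε/2) • v - w = (a - w) + (ε/2) • v := by abel
    have r2 : a - (ε/2) • v - w = (a - w) - (ε/2) • v := by abel
    rw [r1, inner_add_right, real_inner_smul_right, real_inner_self_eq_norm_sq, hv] at e1
    rw [r2, inner_sub_right, real_inner_smul_right, real_inner_self_eq_norm_sq, hv] at e2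
    norm_num at e1 e2
    linarith
  -- if u itself admits a touching enclosing ball, contradiction
  have hfin0 : ∀ w ∈ K, w - r • u ∈ L → False := by
    intro w hw hm
    have h1 : dist x (w - r • u) ≤ r := hxL _ hm
    have h2 : ⟪u, x - (w - r • u)⟫ ≤ ‖x - (w - r • u)‖ := by
      have h := real_inner_le_norm u (x - (w - r • u))
      rwa [hunorm, one_mul] at h
    have hxw : x - (w - r • u) = (x - y) + (y - w) + r • u := by abel
    have h3 : ⟪u, x - (w - r • u)⟫ = d + ⟪u, y - w⟫ + r := by
      rw [hxw, inner_add_right, inner_add_right, real_inner_smul_right,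
        real_inner_self_eq_norm_sq, hunorm, huxy]
      norm_num
    have h4 : 0 ≤ ⟪u, y - w⟫ := by
      have h := hproju w hw
      have : y - w = -(w - y) := by abel
      rw [this, inner_neg_right]
      linarith
    rw [dist_eq_norm] at h1
    linarith [h3 ▸ h2]
  -- sliding gives touching balls at non-interior points of K
  have hGP : ∀ w ∈ K, w ∉ interior K → ∃ ψ, w - r • U ψ ∈ L := by
    intro w hw hni
    have hfr : w ∈ frontier K := by rw [hKcl.frontier_eq]; exact ⟨hw, hni⟩
    obtain ⟨p, hdist, hsub⟩ := hslide w hfr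
    have hwp : ‖w - p‖ = r := by rw [← dist_eq_norm]; exact hdist
    obtain ⟨v, hv⟩ : ∃ v : EuclideanSpace ℝ (Fin 2), v = r⁻¹ • (w - p) := ⟨_, rfl⟩
    have hvn : ‖v‖ = 1 := by
      rw [hv, norm_smul, Real.norm_eq_abs, abs_of_pos (inv_pos.mpr hr), hwp]
      field_simp
    obtain ⟨ψ, hψ⟩ := hUsurj v hvn
    refine ⟨ψ, ?_⟩
    have hre : w - r • U ψ = p := by
      rw [hψ, hv, smul_smul, mul_inv_cancel₀ hr.ne', one_smul, sub_sub_cancel]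
    rw [hre]
    intro z hz
    exact mem_closedBall.mp (hsub hz)
  -- support points are not interior
  have hfmem : ∀ (v w : EuclideanSpace ℝ (Fin 2)), ‖v‖ = 1 → w ∈ K →
      (∀ z ∈ K, ⟪v, z - w⟫ ≤ 0) → w ∉ interior K := by
    intro v w hv hw hmax hin
    obtain ⟨ε, hε, hball⟩ := Metric.isOpen_iff.mp isOpen_interior w hin
    have hd1 : dist (w + (ε/2) • v) w < ε := by
      rw [dist_eq_norm, add_sub_cancel_left, norm_smul, Real.norm_eq_abs, hv,
        abs_of_pos (by linarith), mul_one]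
      linarith
    have hz1 : w + (ε/2) • v ∈ K := interior_subset (hball (mem_ball.mpr hd1))
    have e1 := hmax _ hz1
    rw [add_sub_cancel_left, real_inner_smul_right, real_inner_self_eq_norm_sq, hv] at e1
    norm_num at e1
    linarith
  -- unique argmax
  have huarg : ∀ (ψ : ℝ) (w₁ w₂ : EuclideanSpace ℝ (Fin 2)), w₁ ∈ K → w₂ ∈ K →
      (∀ z ∈ K, ⟪U ψ, z - w₁⟫ ≤ 0) → (∀ z ∈ K, ⟪U ψ, z - w₂⟫ ≤ 0) → w₁ = w₂ := by
    intro ψ w₁ w₂ h1K h2K h1 h2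
    by_contra hne
    obtain ⟨m, hm⟩ : ∃ m : EuclideanSpace ℝ (Fin 2), m = (2⁻¹ : ℝ) • (w₁ + w₂) := ⟨_, rfl⟩
    have hmK : m ∈ K := by
      have h := hconv h1K h2K (by norm_num : (0:ℝ) ≤ 2⁻¹) (by norm_num : (0:ℝ) ≤ 2⁻¹)
        (by norm_num)
      rw [hm, smul_add]
      exact h
    have hmax : ∀ z ∈ K, ⟪U ψ, z - m⟫ ≤ 0 := by
      intro z hz
      have e1 := h1 z hz
      have e2 := h2 z hz
      have hrw : z - m = (2⁻¹ : ℝ) • ((z - w₁) + (z - w₂)) := by rw [hm]; module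
      rw [hrw, real_inner_smul_right, inner_add_right]
      linarith
    have hni := hfmem (U ψ) m (hUnorm ψ) hmK hmax
    obtain ⟨φ, hφL⟩ := hGP m hmK hni
    have q1 := hmemL hφL w₁ h1K
    have q2 := hmemL hφL w₂ h2K
    have hsum : ⟪w₁ - m, U φ⟫ + ⟪w₂ - m, U φ⟫ = 0 := by
      rw [← inner_add_left, show (w₁ - m) + (w₂ - m) = 0 by rw [hm]; module,
        inner_zero_left]
    have h1z : w₁ - m = 0 := by
      have ha := norm_nonneg (w₁ - m)
      have hb := norm_nonneg (w₂ - m)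
      have hnn : ‖w₁ - m‖ = 0 := by nlinarith
      exact norm_eq_zero.mp hnn
    have h2z : w₂ - m = 0 := by
      have ha := norm_nonneg (w₁ - m)
      have hb := norm_nonneg (w₂ - m)
      have hnn : ‖w₂ - m‖ = 0 := by nlinarith
      exact norm_eq_zero.mp hnn
    apply hne
    have e1 : w₁ = m := by rwa [sub_eq_zero] at h1z
    have e2 : w₂ = m := by rwa [sub_eq_zero] at h2z
    rw [e1, e2]
  -- existence of argmax
  have hearg : ∀ ψ : ℝ, ∃ w ∈ K, ∀ z ∈ K, ⟪U ψ, z - w⟫ ≤ 0 := by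
    intro ψ
    obtain ⟨w, hwK, hwmax⟩ := hcomp.exists_isMaxOn hKne
      ((continuous_const.inner continuous_id).continuousOn :
        ContinuousOn (fun z => ⟪U ψ, z⟫) K)
    refine ⟨w, hwK, fun z hz => ?_⟩
    have h : (⟪U ψ, z⟫ : ℝ) ≤ ⟪U ψ, w⟫ := hwmax hz
    rw [inner_sub_right]
    linarith [h]
  have hπ := Real.pi_pos
  -- the set of good angles
  obtain ⟨Z, hZdef⟩ : ∃ Z : Set ℝ, Z = {ψ : ℝ | ∃ w ∈ K, w - r • U ψ ∈ L} := ⟨_, rfl⟩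
  have hZmem : ∀ {ψ : ℝ}, ψ ∈ Z ↔ ∃ w ∈ K, w - r • U ψ ∈ L := by
    intro ψ; rw [hZdef]; exact Iff.rfl
  have hZ0 : (0:ℝ) ∉ Z := by
    intro h0
    obtain ⟨w, hwK, hwL⟩ := hZmem.mp h0
    rw [hU0] at hwL
    exact hfin0 w hwK hwL
  have hZper : ∀ {ψ : ℝ} (k : ℤ), ψ ∈ Z → ψ + k * (2 * Real.pi) ∈ Z := by
    intro ψ k hψ
    obtain ⟨w, hwK, hwL⟩ := hZmem.mp hψ
    refine hZmem.mpr ⟨w, hwK, ?_⟩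
    rw [hUper ψ k]
    exact hwL
  -- Z is nonempty
  have hZne : ∃ ψ, ψ ∈ Z := by
    obtain ⟨w, hwK, hwmax⟩ := hearg 0
    obtain ⟨ψ, hψL⟩ := hGP w hwK (hfmem (U 0) w (hUnorm 0) hwK hwmax)
    exact ⟨ψ, hZmem.mpr ⟨w, hwK, hψL⟩⟩
  -- compactness of Z ∩ [a,b]
  have hZIcc : ∀ a b : ℝ, IsCompact {ψ | ψ ∈ Icc a b ∧ ψ ∈ Z} := by
    intro a b
    have himg : {ψ | ψ ∈ Icc a b ∧ ψ ∈ Z} = (fun q : ℝ × EuclideanSpace ℝ (Fin 2) => q.1) ''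
        {q : ℝ × EuclideanSpace ℝ (Fin 2) | q.1 ∈ Icc a b ∧ q.2 ∈ K ∧ q.2 - r • U q.1 ∈ L} := by
      ext ψ
      constructor
      · rintro ⟨hab, hψZ⟩
        obtain ⟨w, hwK, hwL⟩ := hZmem.mp hψZ
        exact ⟨(ψ, w), ⟨hab, hwK, hwL⟩, rfl⟩
      · rintro ⟨⟨ψ', w⟩, ⟨hab, hwK, hwL⟩, rfl⟩
        exact ⟨hab, hZmem.mpr ⟨w, hwK, hwL⟩⟩
    rw [himg]
    apply IsCompact.image _ continuous_fst
    apply IsCompact.of_isClosed_subset (isCompact_Icc.prod hcomp)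
    · apply IsClosed.inter (isClosed_Icc.preimage continuous_fst)
      apply IsClosed.inter (hKcl.preimage continuous_snd)
      exact hLclosed.preimage (continuous_snd.sub ((hUcont.comp continuous_fst).const_smul r))
    · rintro ⟨ψ', w⟩ ⟨hab, hwK, _⟩
      exact ⟨hab, hwK⟩
  -- the endpoints of the gap around 0
  obtain ⟨ψ₀, hψ₀Z⟩ := hZne
  obtain ⟨kp, hkp⟩ : ∃ k : ℤ, ψ₀ + k * (2*Real.pi) ∈ Icc (0:ℝ) (2*Real.pi) := by
    refine ⟨-⌊ψ₀ / (2*Real.pi)⌋, ?_, ?_⟩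
    · push_cast
      rw [neg_mul, ← sub_eq_add_neg, sub_nonneg]
      have := Int.floor_le (ψ₀ / (2*Real.pi))
      calc (⌊ψ₀ / (2*Real.pi)⌋ : ℝ) * (2*Real.pi) ≤ ψ₀ / (2*Real.pi) * (2*Real.pi) := by
            apply mul_le_mul_of_nonneg_right this (by linarith)
        _ = ψ₀ := by field_simp
    · push_cast
      rw [neg_mul, ← sub_eq_add_neg]
      have := Int.lt_floor_add_one (ψ₀ / (2*Real.pi))
      have h2 : ψ₀ / (2*Real.pi) * (2*Real.pi) < (⌊ψ₀ / (2*Real.pi)⌋ + 1 : ℝ) * (2*Real.pi) := by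
        apply mul_lt_mul_of_pos_right this (by linarith)
      rw [div_mul_cancel₀ _ (by positivity : (2*Real.pi) ≠ 0)] at h2
      nlinarith
  obtain ⟨Zp, hZp⟩ : ∃ Zp : Set ℝ, Zp = {ψ | ψ ∈ Icc (0:ℝ) (2*Real.pi) ∧ ψ ∈ Z} := ⟨_, rfl⟩
  have hZpcpt : IsCompact Zp := hZp ▸ hZIcc 0 (2*Real.pi)
  have hZpne : Zp.Nonempty := ⟨ψ₀ + kp * (2*Real.pi), hZp ▸ ⟨hkp, hZper kp hψ₀Z⟩⟩
  obtain ⟨θp, hθpdef⟩ : ∃ θp : ℝ, θp = sInf Zp := ⟨_, rfl⟩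
  have hθpZp : θp ∈ Zp := hθpdef ▸ hZpcpt.sInf_mem hZpne
  have hθpZ : θp ∈ Z := (hZp ▸ hθpZp : _ ∧ _).2
  have hθpIcc : θp ∈ Icc (0:ℝ) (2*Real.pi) := (hZp ▸ hθpZp : _ ∧ _).1
  have hθppos : 0 < θp := lt_of_le_of_ne hθpIcc.1 (fun h => hZ0 (h ▸ hθpZ))
  obtain ⟨Zm, hZm⟩ : ∃ Zm : Set ℝ, Zm = {ψ | ψ ∈ Icc (-(2*Real.pi)) 0 ∧ ψ ∈ Z} := ⟨_, rfl⟩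
  have hZmcpt : IsCompact Zm := hZm ▸ hZIcc (-(2*Real.pi)) 0
  have hZmne : Zm.Nonempty := by
    refine ⟨θp + (-1 : ℤ) * (2*Real.pi), hZm ▸ ⟨⟨?_, ?_⟩, hZper (-1) hθpZ⟩⟩
    · push_cast; linarith [hθpIcc.1]
    · push_cast; linarith [hθpIcc.2]
  obtain ⟨θm, hθmdef⟩ : ∃ θm : ℝ, θm = sSup Zm := ⟨_, rfl⟩
  have hθmZm : θm ∈ Zm := hθmdef ▸ hZmcpt.sSup_mem hZmne
  have hθmZ : θm ∈ Z := (hZm ▸ hθmZm : _ ∧ _).2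
  have hθmIcc : θm ∈ Icc (-(2*Real.pi)) 0 := (hZm ▸ hθmZm : _ ∧ _).1
  have hθmneg : θm < 0 := lt_of_le_of_ne hθmIcc.2 (fun h => hZ0 (h ▸ hθmZ))
  -- no good angle inside the gap
  have hgap : ∀ ψ, θm < ψ → ψ < θp → ψ ∉ Z := by
    intro ψ h1 h2 hψZ
    rcases le_or_gt 0 ψ with h | h
    · have hmem : ψ ∈ Zp := hZp ▸ ⟨⟨h, by linarith [hθpIcc.2]⟩, hψZ⟩
      have := hθpdef ▸ csInf_le hZpcpt.bddBelow hmem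
      linarith
    · have hmem : ψ ∈ Zm := hZm ▸ ⟨⟨by linarith [hθmIcc.1], h.le⟩, hψZ⟩
      have := hθmdef ▸ le_csSup hZmcpt.bddAbove hmem
      linarith
  -- the compact set of "left-good" configurations
  obtain ⟨Pm, hPmdef⟩ : ∃ Pm : Set (ℝ × EuclideanSpace ℝ (Fin 2) × ℝ),
      Pm = {q : ℝ × EuclideanSpace ℝ (Fin 2) × ℝ | q.1 ∈ Icc θm θp ∧ q.2.1 ∈ K ∧
        q.1 - Real.pi ≤ q.2.2 ∧ q.2.2 ≤ θm ∧ q.2.1 - r • U q.2.2 ∈ L ∧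
        ∀ z ∈ K, ⟪U q.1, z - q.2.1⟫ ≤ 0} := ⟨_, rfl⟩
  have hPmclosed : IsClosed Pm := by
    rw [hPmdef]
    have hrw : {q : ℝ × EuclideanSpace ℝ (Fin 2) × ℝ | q.1 ∈ Icc θm θp ∧ q.2.1 ∈ K ∧
        q.1 - Real.pi ≤ q.2.2 ∧ q.2.2 ≤ θm ∧ q.2.1 - r • U q.2.2 ∈ L ∧
        ∀ z ∈ K, ⟪U q.1, z - q.2.1⟫ ≤ 0}
        = {q : ℝ × EuclideanSpace ℝ (Fin 2) × ℝ | q.1 ∈ Icc θm θp} ∩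
          ({q | q.2.1 ∈ K} ∩ ({q | q.1 - Real.pi ≤ q.2.2} ∩ ({q | q.2.2 ≤ θm} ∩
          ({q | q.2.1 - r • U q.2.2 ∈ L} ∩ ⋂ z ∈ K, {q | ⟪U q.1, z - q.2.1⟫ ≤ 0})))) := by
      ext q
      simp only [Set.mem_inter_iff, Set.mem_setOf_eq, Set.mem_iInter]
      try tauto
    rw [hrw]
    refine (isClosed_Icc.preimage continuous_fst).inter ?_
    refine (hKcl.preimage (continuous_fst.comp continuous_snd)).inter ?_
    refine (isClosed_le (continuous_fst.sub continuous_const)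
      (continuous_snd.comp continuous_snd)).inter ?_
    refine (isClosed_le (continuous_snd.comp continuous_snd) continuous_const).inter ?_
    refine (hLclosed.preimage ((continuous_fst.comp continuous_snd).sub
      ((hUcont.comp (continuous_snd.comp continuous_snd)).const_smul r))).inter ?_
    exact isClosed_biInter fun z _ => isClosed_le
      ((hUcont.comp continuous_fst).inner
        (continuous_const.sub (continuous_fst.comp continuous_snd))) continuous_const
  have hPmcpt : IsCompact Pm := by
    apply IsCompact.of_isClosed_subset
      (isCompact_Icc.prod (hcomp.prod (isCompact_Icc (a := θm - Real.pi) (b := θm))))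
      hPmclosed
    rw [hPmdef]
    rintro ⟨θ, w, ψ⟩ ⟨h1, h2, h3, h4, -, -⟩
    exact ⟨h1, h2, ⟨by simp only []; linarith [h1.1], h4⟩⟩
  have hPmne : Pm.Nonempty := by
    obtain ⟨w, hwK, hwL⟩ := hZmem.mp hθmZ
    refine ⟨(θm, w, θm), ?_⟩
    rw [hPmdef]
    exact ⟨⟨le_refl _, by linarith⟩, hwK, by simp only []; linarith, le_refl _, hwL, hnrm hwL⟩
  have hS1cpt : IsCompact (Prod.fst '' Pm) := hPmcpt.image continuous_fst
  have hmemS := hS1cpt.sSup_mem (hPmne.image _)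
  obtain ⟨⟨θh, W, ψm⟩, hq0, hq1⟩ := hmemS
  have hq1' : θh = sSup (Prod.fst '' Pm) := hq1
  rw [hPmdef] at hq0
  obtain ⟨hθhIcc, hWK, hψm1, hψm2, hψmL, hWmax⟩ := hq0
  simp only [Set.mem_setOf_eq] at hθhIcc hWK hψm1 hψm2 hψmL hWmax
  -- exclude ψm = θh - π
  have hUsubpi : ∀ ψ : ℝ, U (ψ - Real.pi) = -U ψ := by
    intro ψ
    have h2 := hUpi (ψ - Real.pi)
    rw [show ψ - Real.pi + Real.pi = ψ by ring] at h2
    rw [h2, neg_neg]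
  have hψm_gt : θh - Real.pi < ψm := by
    rcases lt_or_eq_of_le hψm1 with h | h
    · exact h
    · exfalso
      apply hflat W (U θh) (hUnorm θh) hWmax
      intro z hz
      have h3 := hnrm hψmL z hz
      rw [← h, hUsubpi, inner_neg_left] at h3
      linarith
  -- obtain the right flanking good angle ψp
  obtain ⟨ψp, hψpL, hψp_ge, hψp_lt⟩ :
      ∃ ψp : ℝ, (W - r • U ψp ∈ L) ∧ θp ≤ ψp ∧ ψp < θh + Real.pi := by
    rcases eq_or_lt_of_le hθhIcc.2 with hcase | hcase
    · -- θh = θp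
      obtain ⟨w', hw'K, hw'L⟩ := hZmem.mp hθpZ
      have hWw' : W = w' :=
        huarg θh W w' hWK hw'K hWmax (by rw [hcase]; exact hnrm hw'L)
      exact ⟨θp, by rw [hWw']; exact hw'L, le_refl _, by rw [← hcase]; linarith⟩
    · -- θh < θp : use the compact set of "right-good" configurations
      obtain ⟨Pp, hPpdef⟩ : ∃ Pp : Set (ℝ × EuclideanSpace ℝ (Fin 2) × ℝ),
          Pp = {q : ℝ × EuclideanSpace ℝ (Fin 2) × ℝ | q.1 ∈ Icc θh θp ∧ q.2.1 ∈ K ∧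
            θp ≤ q.2.2 ∧ q.2.2 ≤ q.1 + Real.pi ∧ q.2.1 - r • U q.2.2 ∈ L ∧
            ∀ z ∈ K, ⟪U q.1, z - q.2.1⟫ ≤ 0} := ⟨_, rfl⟩
      have hPpclosed : IsClosed Pp := by
        rw [hPpdef]
        have hrw : {q : ℝ × EuclideanSpace ℝ (Fin 2) × ℝ | q.1 ∈ Icc θh θp ∧ q.2.1 ∈ K ∧
            θp ≤ q.2.2 ∧ q.2.2 ≤ q.1 + Real.pi ∧ q.2.1 - r • U q.2.2 ∈ L ∧
            ∀ z ∈ K, ⟪U q.1, z - q.2.1⟫ ≤ 0}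
            = {q : ℝ × EuclideanSpace ℝ (Fin 2) × ℝ | q.1 ∈ Icc θh θp} ∩
              ({q | q.2.1 ∈ K} ∩ ({q | θp ≤ q.2.2} ∩ ({q | q.2.2 ≤ q.1 + Real.pi} ∩
              ({q | q.2.1 - r • U q.2.2 ∈ L} ∩ ⋂ z ∈ K, {q | ⟪U q.1, z - q.2.1⟫ ≤ 0})))) := by
          ext q
          simp only [Set.mem_inter_iff, Set.mem_setOf_eq, Set.mem_iInter]
          try tauto
        rw [hrw]
        refine (isClosed_Icc.preimage continuous_fst).inter ?_
        refine (hKcl.preimage (continuous_fst.comp continuous_snd)).inter ?_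
        refine (isClosed_le continuous_const (continuous_snd.comp continuous_snd)).inter ?_
        refine (isClosed_le (continuous_snd.comp continuous_snd)
          (continuous_fst.add continuous_const)).inter ?_
        refine (hLclosed.preimage ((continuous_fst.comp continuous_snd).sub
          ((hUcont.comp (continuous_snd.comp continuous_snd)).const_smul r))).inter ?_
        exact isClosed_biInter fun z _ => isClosed_le
          ((hUcont.comp continuous_fst).inner
            (continuous_const.sub (continuous_fst.comp continuous_snd))) continuous_const
      have hPpcpt : IsCompact Pp := by
        apply IsCompact.of_isClosed_subset
          (isCompact_Icc.prod (hcomp.prod (isCompact_Icc (a := θp) (b := θp + Real.pi))))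
          hPpclosed
        rw [hPpdef]
        rintro ⟨θ, w, ψ⟩ ⟨h1, h2, h3, h4, -, -⟩
        exact ⟨h1, h2, ⟨h3, by simp only []; linarith [h1.2]⟩⟩
      have hIoo : Ioo θh θp ⊆ Prod.fst '' Pp := by
        intro θ hθ
        obtain ⟨w, hwK, hwmax⟩ := hearg θ
        obtain ⟨ψ₀', hψ₀'L⟩ := hGP w hwK (hfmem (U θ) w (hUnorm θ) hwK hwmax)
        obtain ⟨k, hk⟩ : ∃ k : ℤ, k = ⌊(θ + Real.pi - ψ₀')/(2*Real.pi)⌋ := ⟨_, rfl⟩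
        obtain ⟨ψ', hψ'⟩ : ∃ ψ' : ℝ, ψ' = ψ₀' + k * (2*Real.pi) := ⟨_, rfl⟩
        have hb2 : ψ' ≤ θ + Real.pi := by
          have h1 : (k:ℝ) ≤ (θ + Real.pi - ψ₀')/(2*Real.pi) := hk ▸ Int.floor_le _
          have h2 : (k:ℝ) * (2*Real.pi) ≤ (θ + Real.pi - ψ₀')/(2*Real.pi) * (2*Real.pi) :=
            mul_le_mul_of_nonneg_right h1 (by linarith)
          rw [div_mul_cancel₀ _ (by positivity : (2*Real.pi) ≠ 0)] at h2
          rw [hψ']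
          linarith
        have hb1 : θ - Real.pi < ψ' := by
          have h1 : (θ + Real.pi - ψ₀')/(2*Real.pi) < (k:ℝ) + 1 := hk ▸ Int.lt_floor_add_one _
          have h2 : (θ + Real.pi - ψ₀')/(2*Real.pi) * (2*Real.pi) < ((k:ℝ) + 1) * (2*Real.pi) :=
            mul_lt_mul_of_pos_right h1 (by linarith)
          rw [div_mul_cancel₀ _ (by positivity : (2*Real.pi) ≠ 0)] at h2
          rw [hψ']
          nlinarith
        have hψ'L : w - r • U ψ' ∈ L := by rw [hψ', hUper ψ₀' k]; exact hψ₀'L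
        rcases eq_or_lt_of_le hb2 with he | hlt2
        · exfalso
          apply hflat w (U θ) (hUnorm θ) hwmax
          intro z hz
          have h3 := hnrm hψ'L z hz
          rw [he, hUpi, inner_neg_left] at h3
          linarith
        · have hψ'Z : ψ' ∈ Z := hZmem.mpr ⟨w, hwK, hψ'L⟩
          rcases le_or_gt ψ' θm with hle | hgt
          · exfalso
            have hqPm : (θ, w, ψ') ∈ Pm := by
              rw [hPmdef]
              exact ⟨⟨by linarith [hθ.1, hθhIcc.1], hθ.2.le⟩, hwK,
                by simp only []; linarith, hle, hψ'L, hwmax⟩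
            have hθS1 : θ ∈ Prod.fst '' Pm := ⟨(θ, w, ψ'), hqPm, rfl⟩
            have hθle : θ ≤ sSup (Prod.fst '' Pm) := le_csSup hS1cpt.bddAbove hθS1
            rw [← hq1'] at hθle
            linarith [hθ.1]
          · have hψ'θp : θp ≤ ψ' := by
              by_contra hc
              push_neg at hc
              exact hgap ψ' hgt hc hψ'Z
            refine ⟨(θ, w, ψ'), ?_, rfl⟩
            rw [hPpdef]
            exact ⟨⟨hθ.1.le, hθ.2.le⟩, hwK, hψ'θp, hlt2.le, hψ'L, hwmax⟩
      have hθhmem : θh ∈ Prod.fst '' Pp := by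
        have hcls : closure (Ioo θh θp) ⊆ Prod.fst '' Pp :=
          closure_minimal hIoo (hPpcpt.image continuous_fst).isClosed
        apply hcls
        rw [closure_Ioo (ne_of_lt hcase)]
        exact ⟨le_refl _, hcase.le⟩
      obtain ⟨⟨θ', W', ψp⟩, hq'0, hq'1⟩ := hθhmem
      have hq'1' : θ' = θh := hq'1
      rw [hPpdef] at hq'0
      obtain ⟨hθ'Icc, hW'K, hψp1, hψp2, hψpL', hW'max⟩ := hq'0
      simp only [Set.mem_setOf_eq] at hθ'Icc hW'K hψp1 hψp2 hψpL' hW'max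
      rw [hq'1'] at hψp2 hW'max
      have hW'W : W' = W := huarg θh W' W hW'K hWK hW'max hWmax
      rw [hW'W] at hψpL'
      refine ⟨ψp, hψpL', hψp1, ?_⟩
      rcases lt_or_eq_of_le hψp2 with h | h
      · exact h
      · exfalso
        apply hflat W (U θh) (hUnorm θh) hWmax
        intro z hz
        have h3 := hnrm hψpL' z hz
        rw [h, hUpi, inner_neg_left] at h3
        linarith
  -- final dichotomy
  have hψm0 : ψm ≤ 0 := by linarith
  have hψp0 : (0:ℝ) ≤ ψp := by linarith
  rcases lt_or_ge (ψp - ψm) Real.pi with hcA | hcB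
  · -- combine the two flanking balls into one touching in direction u
    obtain ⟨α, β, hα, hβ, hαβ, hid⟩ := SlideAux.U_comb u ju hψm0 hψp0 hcA
    have hidU : α • U ψm + β • U ψp = U 0 := by
      rw [hUval ψm, hUval ψp, hUval 0]
      exact hid
    have hmem0 : W - r • U 0 ∈ L := by
      intro z hz
      apply (SlideAux.quad_mem hr z W (U 0) (hUnorm 0)).mpr
      have q1 := hmemL hψmL z hz
      have q2 := hmemL hψpL z hz
      have hin : (⟪z - W, U 0⟫ : ℝ) = α * ⟪z - W, U ψm⟫ + β * ⟪z - W, U ψp⟫ := by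
        rw [← hidU, inner_add_right, real_inner_smul_right, real_inner_smul_right]
      rw [hin]
      have e1 : α * (2*r*⟪z - W, U ψm⟫ + ‖z - W‖^2) ≤ 0 :=
        mul_nonpos_of_nonneg_of_nonpos hα q1
      have e2 : β * (2*r*⟪z - W, U ψp⟫ + ‖z - W‖^2) ≤ 0 :=
        mul_nonpos_of_nonneg_of_nonpos hβ q2
      have e3 : 0 ≤ (α + β - 1) * ‖z - W‖^2 := mul_nonneg (by linarith) (sq_nonneg _)
      nlinarith [e1, e2, e3]
    rw [hU0] at hmem0
    exact hfin0 W hWK hmem0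
  · -- the normal cone at W contains opposite directions : contradiction
    have hlam1 : θh < ψm + Real.pi := by linarith
    have hlam2 : ψm + Real.pi ≤ ψp := by linarith
    have hnl : ∀ z ∈ K, ⟪U (ψm + Real.pi), z - W⟫ ≤ 0 := by
      rcases eq_or_lt_of_le hlam2 with he | hlt
      · intro z hz
        rw [he]
        exact hnrm hψpL z hz
      · obtain ⟨α, β, hα, hβ, hαβ, hid⟩ :=
          SlideAux.U_comb u ju (le_of_lt hlam1) (le_of_lt hlt) (by linarith)
        have hidU : α • U θh + β • U ψp = U (ψm + Real.pi) := by
          rw [hUval θh, hUval ψp, hUval (ψm + Real.pi)]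
          exact hid
        intro z hz
        have h1 := hWmax z hz
        have h2 := hnrm hψpL z hz
        have hin : (⟪U (ψm + Real.pi), z - W⟫ : ℝ)
            = α * ⟪U θh, z - W⟫ + β * ⟪U ψp, z - W⟫ := by
          rw [← hidU, inner_add_left, real_inner_smul_left, real_inner_smul_left]
        rw [hin]
        have e1 := mul_nonpos_of_nonneg_of_nonpos hα h1
        have e2 := mul_nonpos_of_nonneg_of_nonpos hβ h2
        linarith
    apply hflat W (U ψm) (hUnorm ψm) (hnrm hψmL)
    intro z hz
    have h := hnl z hz
    rw [hUpi ψm, inner_neg_left] at h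
    linarith
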